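/- arXiv:1710.10533 — 4 statements merged into one kernel-verified Lean document; each statement's English description precedes it below -/
import Mathlib

section
/- Let m, r be natural numbers and let d_{pq}^{kl} ∈ ℂ (p,q ∈ {1,…,r}, k,l ∈ {1,…,m}) be any constants satisfying d_{pq}^{kl} = d_{qp}^{kl}. Let A be the quotient of the free unital associative ℂ-algebra on generators x_1,…,x_m, y_1,…,y_r by the two-sided ideal generated by the homogeneous quadratic relations x_i x_j − x_j x_i, x_i y_p − y_p x_i, and y_p y_q + y_q y_p − Σ_{k,l} d_{pq}^{kl} x_k x_l (for all i,j ∈ {1,…,m}, p,q ∈ {1,…,r}). Then the images in A of the ordered monomials x_1^{k_1} ⋯ x_m^{k_m} y_{p_1} ⋯ y_{p_s}, with k_1,…,k_m ≥ 0 and 1 ≤ p_1 < ⋯ < p_s ≤ r, form a ℂ-vector-space basis of A. -/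
/-!
The monomials span: the `x i` are central, and `y p * y T` (with `y T` an ordered product) is
brought into order by moving `y p` to its place, each transposition `y p y a = - y a y p + D p a`
producing only terms with fewer odd factors, where `D p q = ∑ d p q k l • x k x l`.

They are independent: over `R = ℂ[x]`, `x i ↦ x i`, `y p ↦ e p` maps the algebra to the Clifford
algebra of the quadratic form `v ↦ ½ ∑ D p q v p v q` on `R ^ r` (this is where `d` must be
symmetric in `p, q`). Chevalley's map `CliffordAlgebra.changeForm` identifies that Clifford algebra
`R`-linearly with the exterior algebra, sending `e p₁ ⋯ e pₛ` (`p₁ < ⋯ < pₛ`) to `e p₁ ∧ ⋯ ∧ e pₛ`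
plus terms of lower degree, so ordered products are `R`-independent, and the images
`x ^ k • e T` of the monomials are `ℂ`-independent.
-/

open scoped BigOperators

/-- The homogeneous quadratic relations of a homogeneous quadratic superalgebra with
even generators `x i` (`i : Fin m`, encoded `Sum.inl i`) and odd generators `y p`
(`p : Fin r`, encoded `Sum.inr p`). -/
inductive QSRel (m r : ℕ) (d : Fin r → Fin r → Fin m → Fin m → ℂ) :
    FreeAlgebra ℂ (Fin m ⊕ Fin r) → FreeAlgebra ℂ (Fin m ⊕ Fin r) → Prop
  | evenEven (i j : Fin m) :
      QSRel m r d
        (FreeAlgebra.ι ℂ (Sum.inl i) * FreeAlgebra.ι ℂ (Sum.inl j))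
        (FreeAlgebra.ι ℂ (Sum.inl j) * FreeAlgebra.ι ℂ (Sum.inl i))
  | evenOdd (i : Fin m) (p : Fin r) :
      QSRel m r d
        (FreeAlgebra.ι ℂ (Sum.inl i) * FreeAlgebra.ι ℂ (Sum.inr p))
        (FreeAlgebra.ι ℂ (Sum.inr p) * FreeAlgebra.ι ℂ (Sum.inl i))
  | oddOdd (p q : Fin r) :
      QSRel m r d
        (FreeAlgebra.ι ℂ (Sum.inr p) * FreeAlgebra.ι ℂ (Sum.inr q) +
          FreeAlgebra.ι ℂ (Sum.inr q) * FreeAlgebra.ι ℂ (Sum.inr p))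
        (∑ k : Fin m, ∑ l : Fin m,
          d p q k l • (FreeAlgebra.ι ℂ (Sum.inl k) * FreeAlgebra.ι ℂ (Sum.inl l)))

/-- The homogeneous quadratic superalgebra: quotient of the free algebra by the
two-sided ideal generated by the relations. -/
noncomputable abbrev QSAlgebra (m r : ℕ) (d : Fin r → Fin r → Fin m → Fin m → ℂ) :=
  RingQuot (QSRel m r d)

/-- Images of the generators in the quotient. -/
noncomputable def qsGen (m r : ℕ) (d : Fin r → Fin r → Fin m → Fin m → ℂ)
    (g : Fin m ⊕ Fin r) : QSAlgebra m r d :=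
  RingQuot.mkAlgHom ℂ (QSRel m r d) (FreeAlgebra.ι ℂ g)

/-- The ordered monomial `x 0 ^ k 0 * ⋯ * x (m-1) ^ k (m-1) * y p₁ * ⋯ * y pₛ`,
indexed by the exponent vector `k` and the set `{p₁ < ⋯ < pₛ}` of odd indices. -/
noncomputable def qsMonomial (m r : ℕ) (d : Fin r → Fin r → Fin m → Fin m → ℂ)
    (idx : (Fin m → ℕ) × Finset (Fin r)) : QSAlgebra m r d :=
  (((List.finRange m).map fun i => qsGen m r d (Sum.inl i) ^ idx.1 i).prod) *
    ((idx.2.sort (· ≤ ·)).map fun p => qsGen m r d (Sum.inr p)).prod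


open Module

namespace Finset

variable {I A : Type*} [LinearOrder I] [Monoid A]

noncomputable def sortedProd (s : Finset I) (f : I → A) : A :=
  ((s.sort (· ≤ ·)).map f).prod

@[simp] lemma sortedProd_empty (f : I → A) : (∅ : Finset I).sortedProd f = 1 := by
  simp [sortedProd]

lemma sortedProd_insert_of_lt {s : Finset I} {a : I} (h : ∀ x ∈ s, a < x) (f : I → A) :
    (insert a s).sortedProd f = f a * s.sortedProd f := by
  rw [sortedProd, sort_insert _ (fun x hx => (h x hx).le) fun ha => lt_irrefl a (h a ha)]
  rfl

lemma map_sortedProd {B F : Type*} [Monoid B] [FunLike F A B] [MonoidHomClass F A B] (φ : F)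
    (s : Finset I) (f : I → A) : φ (s.sortedProd f) = s.sortedProd fun i => φ (f i) := by
  simp [sortedProd, map_list_prod, Function.comp_def]

end Finset

namespace ExteriorAlgebra

variable {R M I : Type*} [CommRing R] [AddCommGroup M] [Module R M] [LinearOrder I]
  (b : Basis I R M)

lemma basis_eq_sortedProd (s : Finset I) :
    b.ExteriorAlgebra s = s.sortedProd fun i => ι R (b i) := by
  rw [basis_apply_ofCard b rfl, ιMulti_family, ιMulti_apply, Finset.sortedProd,
    ← Finset.listMap_orderEmbOfFin_finRange s rfl, List.ofFn_eq_map, List.map_map]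
  rfl

lemma basis_mem_exteriorPower (s : Finset I) : b.ExteriorAlgebra s ∈ ⋀[R]^s.card M :=
  (basis_eq_coe_basis b (Set.powersetCard.ofCard rfl)).symm ▸ Submodule.coe_mem _

noncomputable def degreeLT (n : ℕ) : Submodule R (ExteriorAlgebra R M) :=
  Submodule.span R (b.ExteriorAlgebra '' {s | s.card < n})

variable {b}

lemma degreeLT_mono {n n' : ℕ} (h : n ≤ n') : degreeLT b n ≤ degreeLT b n' :=
  Submodule.span_mono <| Set.image_mono fun _ hs => lt_of_lt_of_le hs h

lemma basis_mem_degreeLT {s : Finset I} {n : ℕ} (h : s.card < n) :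
    b.ExteriorAlgebra s ∈ degreeLT b n :=
  Submodule.subset_span ⟨s, h, rfl⟩

lemma repr_eq_zero_of_mem_degreeLT {x : ExteriorAlgebra R M} {n : ℕ} (hx : x ∈ degreeLT b n)
    {s : Finset I} (hs : n ≤ s.card) : b.ExteriorAlgebra.repr x s = 0 := by
  rw [degreeLT, Basis.mem_span_image] at hx
  exact Finsupp.notMem_support_iff.1 fun h => (hx h).not_ge hs

lemma exteriorPower_le_degreeLT (k : ℕ) : ⋀[R]^k M ≤ degreeLT b (k + 1) := by
  intro x hx
  have hspan := (b.exteriorPower k).mem_span ⟨x, hx⟩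
  have hmap := Submodule.mem_map_of_mem (f := (⋀[R]^k M).subtype) hspan
  rw [Submodule.map_span, ← Set.range_comp] at hmap
  refine Submodule.span_mono ?_ hmap
  rintro _ ⟨s, rfl⟩
  refine ⟨s, by simp [Set.powersetCard.card_eq s], ?_⟩
  simp [basis_eq_coe_basis]

lemma ι_mul_mem_degreeLT (v : M) {x : ExteriorAlgebra R M} {n : ℕ} (hx : x ∈ degreeLT b n) :
    ι R v * x ∈ degreeLT b (n + 1) := by
  induction hx using Submodule.span_induction with
  | mem _ hy =>
    obtain ⟨s, hs : s.card < n, rfl⟩ := hy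
    have : ι R v * b.ExteriorAlgebra s ∈ ⋀[R]^(1 + s.card) M :=
      SetLike.GradedMul.mul_mem (by simp) (basis_mem_exteriorPower b s)
    exact degreeLT_mono (by omega) (exteriorPower_le_degreeLT _ this)
  | zero => simp
  | add _ _ _ _ hx hy => simpa [mul_add] using add_mem hx hy
  | smul c _ _ hx => simpa [mul_smul_comm] using Submodule.smul_mem _ c hx

open CliffordAlgebra in
lemma contractLeft_mem_degreeLT_of_mem_exteriorPower (d : Dual R M) {k : ℕ}
    {x : ExteriorAlgebra R M} (hx : x ∈ ⋀[R]^k M) : contractLeft d x ∈ degreeLT b k := by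
  induction hx using Submodule.pow_induction_on_left' with
  | algebraMap c => simp
  | add _ _ _ _ _ hx hy => simpa using add_mem hx hy
  | mem_mul _ hy k z hz ih =>
    obtain ⟨v, rfl⟩ := hy
    rw [contractLeft_ι_mul]
    exact sub_mem (Submodule.smul_mem _ _ (exteriorPower_le_degreeLT k hz))
      (ι_mul_mem_degreeLT v ih)

open CliffordAlgebra in
lemma contractLeft_mem_degreeLT (d : Dual R M) {x : ExteriorAlgebra R M} {n : ℕ}
    (hx : x ∈ degreeLT b n) : contractLeft d x ∈ degreeLT b n := by
  induction hx using Submodule.span_induction with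
  | mem _ hy =>
    obtain ⟨s, hs, rfl⟩ := hy
    exact degreeLT_mono hs.le
      (contractLeft_mem_degreeLT_of_mem_exteriorPower d (basis_mem_exteriorPower b s))
  | zero => simp
  | add _ _ _ _ hx hy => simpa using add_mem hx hy
  | smul c _ _ hx => simpa using Submodule.smul_mem _ c hx

end ExteriorAlgebra

lemma Module.Basis.linearIndependent_of_repr_unitriangular {κ R N : Type*} [Ring R]
    [AddCommGroup N] [Module R N] (b : Basis κ R N) {v : κ → N} (deg : κ → ℕ)
    (diag : ∀ i, b.repr (v i) i = 1)
    (triangular : ∀ i j, i ≠ j → deg i ≤ deg j → b.repr (v i) j = 0) :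
    LinearIndependent R v := by
  classical
  rw [linearIndependent_iff]
  intro l hl
  by_contra hne
  obtain ⟨j, hj, hmax⟩ := l.support.exists_max_image deg (Finsupp.support_nonempty_iff.2 hne)
  have hcoeff : b.repr (Finsupp.linearCombination R v l) j = l j := by
    rw [Finsupp.linearCombination_apply, Finsupp.sum, map_sum, Finset.sum_apply',
      Finset.sum_eq_single_of_mem j hj fun i hi hij => by simp [triangular i j hij (hmax i hi)]]
    simp [diag]
  exact Finsupp.mem_support_iff.1 hj (by simpa [hl] using hcoeff.symm)

namespace CliffordAlgebra

variable {R M I : Type*} [CommRing R] [AddCommGroup M] [Module R M] [LinearOrder I]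
  (Q : QuadraticForm R M) (b : Basis I R M)

open ExteriorAlgebra

variable {Q} in
/-- `changeForm h` realises `CliffordAlgebra Q` on the exterior algebra, with `ι Q v` acting as
`ι R v * · - contractLeft (B v)`: the leading term of an ordered product is the exterior one. -/
lemma changeForm_sortedProd_sub_mem_degreeLT {B : LinearMap.BilinForm R M}
    (h : B.toQuadraticMap = 0 - Q) (s : Finset I) :
    changeForm h (s.sortedProd fun i => ι Q (b i)) - b.ExteriorAlgebra s ∈
      degreeLT b s.card := by
  induction s using Finset.induction_on_min with
  | empty => simp [basis_eq_sortedProd b]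
  | insert a s ha ih =>
    rw [Finset.sortedProd_insert_of_lt ha, changeForm_ι_mul, basis_eq_sortedProd b,
      Finset.sortedProd_insert_of_lt ha, ← basis_eq_sortedProd b,
      Finset.card_insert_of_notMem fun has => lt_irrefl a (ha a has)]
    set y := changeForm h (s.sortedProd fun i => ι Q (b i))
    have hy : y ∈ degreeLT b (s.card + 1) := by
      simpa using
        add_mem (degreeLT_mono s.card.le_succ ih) (basis_mem_degreeLT s.card.lt_succ_self)
    have hsplit : ι 0 (b a) * y - contractLeft (B (b a)) y -
        ExteriorAlgebra.ι R (b a) * b.ExteriorAlgebra s =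
          ExteriorAlgebra.ι R (b a) * (y - b.ExteriorAlgebra s) - contractLeft (B (b a)) y := by
      noncomm_ring
    rw [hsplit]
    exact sub_mem (ι_mul_mem_degreeLT _ ih) (contractLeft_mem_degreeLT _ hy)

theorem linearIndependent_sortedProd :
    LinearIndependent R fun s : Finset I => s.sortedProd fun i => ι Q (b i) := by
  have h : (-Q.toBilin b).toQuadraticMap = 0 - Q := by
    simp [QuadraticMap.toQuadraticMap_toBilin]
  have hrepr : ∀ s t : Finset I, s.card ≤ t.card →
      b.ExteriorAlgebra.repr (changeForm h (s.sortedProd fun i => ι Q (b i))) t =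
        b.ExteriorAlgebra.repr (b.ExteriorAlgebra s) t := by
    intro s t hst
    rw [← sub_eq_zero, ← Finsupp.sub_apply, ← map_sub]
    exact repr_eq_zero_of_mem_degreeLT (changeForm_sortedProd_sub_mem_degreeLT b h s) hst
  refine LinearIndependent.of_comp (changeForm h)
    (b.ExteriorAlgebra.linearIndependent_of_repr_unitriangular Finset.card (fun s => ?_)
      fun s t hst hcard => ?_)
  · simp [hrepr s s le_rfl]
  · simp [hrepr s t hcard, hst]

end CliffordAlgebra

namespace QSAlgebra

open MvPolynomial

variable {m r : ℕ} {d : Fin r → Fin r → Fin m → Fin m → ℂ}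

variable (m r d) in
noncomputable def oddProd (s : Finset (Fin r)) : QSAlgebra m r d :=
  s.sortedProd fun p => qsGen m r d (.inr p)

noncomputable def anticommPoly (d : Fin r → Fin r → Fin m → Fin m → ℂ) (p q : Fin r) :
    MvPolynomial (Fin m) ℂ :=
  ∑ k, ∑ l, d p q k l • (X k * X l)

lemma qsGen_inl_commute (i : Fin m) (u : QSAlgebra m r d) :
    Commute (qsGen m r d (.inl i)) u := by
  obtain ⟨z, rfl⟩ := RingQuot.mkAlgHom_surjective ℂ (QSRel m r d) u
  induction z using FreeAlgebra.induction with
  | grade0 c => simpa using Algebra.commute_algebraMap_right c _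
  | grade1 g =>
    cases g with
    | inl j => simpa [Commute, SemiconjBy, qsGen] using
        RingQuot.mkAlgHom_rel ℂ (QSRel.evenEven (d := d) i j)
    | inr p => simpa [Commute, SemiconjBy, qsGen] using
        RingQuot.mkAlgHom_rel ℂ (QSRel.evenOdd (d := d) i p)
  | mul a b ha hb => simpa using ha.mul_right hb
  | add a b ha hb => simpa using ha.add_right hb

variable (m r d) in
noncomputable def evenHom : MvPolynomial (Fin m) ℂ →ₐ[ℂ] QSAlgebra m r d :=
  (Subalgebra.center ℂ _).val.comp <| aeval fun i =>
    ⟨qsGen m r d (.inl i), Subalgebra.mem_center_iff.2 fun u => (qsGen_inl_commute i u).eq.symm⟩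

lemma evenHom_commute (f : MvPolynomial (Fin m) ℂ) (u : QSAlgebra m r d) :
    Commute (evenHom m r d f) u :=
  (Subalgebra.mem_center_iff.1 (SetLike.coe_mem _) u).symm

lemma evenHom_X (i : Fin m) : evenHom m r d (X i) = qsGen m r d (.inl i) := by
  simp [evenHom]

lemma qsGen_inr_mul_add_swap (p q : Fin r) :
    qsGen m r d (.inr p) * qsGen m r d (.inr q) + qsGen m r d (.inr q) * qsGen m r d (.inr p) =
      evenHom m r d (anticommPoly d p q) := by
  simpa [anticommPoly, evenHom_X, qsGen] using RingQuot.mkAlgHom_rel ℂ (QSRel.oddOdd (d := d) p q)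

lemma qsMonomial_eq (k : Fin m → ℕ) (s : Finset (Fin r)) :
    qsMonomial m r d (k, s) =
      evenHom m r d (monomial (Finsupp.equivFunOnFinite.symm k) 1) * oddProd m r d s := by
  rw [monomial_eq, Finsupp.prod_fintype _ _ fun _ => pow_zero _, Fin.prod_univ_def]
  simp [qsMonomial, oddProd, Finset.sortedProd, map_list_prod, Function.comp_def, evenHom_X]

variable (m r d) in
noncomputable def oddSpan (V : Finset (Fin r)) : Submodule ℂ (QSAlgebra m r d) :=
  Submodule.span ℂ {u | ∃ f, ∃ U ⊆ V, u = evenHom m r d f * oddProd m r d U}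

lemma evenHom_mul_oddProd_mem_oddSpan (f : MvPolynomial (Fin m) ℂ) {U V : Finset (Fin r)}
    (h : U ⊆ V) : evenHom m r d f * oddProd m r d U ∈ oddSpan m r d V :=
  Submodule.subset_span ⟨f, U, h, rfl⟩

lemma oddProd_mem_oddSpan (U : Finset (Fin r)) : oddProd m r d U ∈ oddSpan m r d U := by
  simpa using evenHom_mul_oddProd_mem_oddSpan (d := d) 1 subset_rfl

lemma oddSpan_mono {V W : Finset (Fin r)} (h : V ⊆ W) : oddSpan m r d V ≤ oddSpan m r d W :=
  Submodule.span_mono fun _ ⟨f, U, hU, hu⟩ => ⟨f, U, hU.trans h, hu⟩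

lemma mul_mem_oddSpan {a u : QSAlgebra m r d} {V W : Finset (Fin r)}
    (h : ∀ f U, U ⊆ V → a * (evenHom m r d f * oddProd m r d U) ∈ oddSpan m r d W)
    (hu : u ∈ oddSpan m r d V) : a * u ∈ oddSpan m r d W :=
  (Submodule.span_le (p := (oddSpan m r d W).comap (LinearMap.mulLeft ℂ a)) |>.2
    (by rintro _ ⟨f, U, hU, rfl⟩; exact h f U hU)) hu

lemma evenHom_mul_mem_oddSpan (g : MvPolynomial (Fin m) ℂ) {u : QSAlgebra m r d}
    {V : Finset (Fin r)} (hu : u ∈ oddSpan m r d V) : evenHom m r d g * u ∈ oddSpan m r d V :=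
  mul_mem_oddSpan (fun f _ hU => by
    simpa [mul_assoc] using evenHom_mul_oddProd_mem_oddSpan (g * f) hU) hu

lemma qsGen_inr_mul_oddProd_of_lt {a : Fin r} {U : Finset (Fin r)} (ha : ∀ x ∈ U, a < x) :
    qsGen m r d (.inr a) * oddProd m r d U = oddProd m r d (insert a U) :=
  (Finset.sortedProd_insert_of_lt ha (fun p => qsGen m r d (.inr p))).symm

lemma qsGen_inr_mul_mem_oddSpan_of_lt {a : Fin r} {V : Finset (Fin r)} (ha : ∀ x ∈ V, a < x)
    {u : QSAlgebra m r d} (hu : u ∈ oddSpan m r d V) :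
    qsGen m r d (.inr a) * u ∈ oddSpan m r d (insert a V) :=
  mul_mem_oddSpan (fun f U hU => by
    rw [← mul_assoc, ← (evenHom_commute f _).eq, mul_assoc,
      qsGen_inr_mul_oddProd_of_lt fun x hx => ha x (hU hx)]
    exact evenHom_mul_oddProd_mem_oddSpan f (Finset.insert_subset_insert a hU)) hu

lemma qsGen_inr_mul_self (p : Fin r) :
    qsGen m r d (.inr p) * qsGen m r d (.inr p) =
      evenHom m r d ((2⁻¹ : ℂ) • anticommPoly d p p) := by
  rw [map_smul, ← qsGen_inr_mul_add_swap, ← two_smul ℂ, smul_smul]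
  norm_num

/-- Moving `y p` past a smaller `y a` costs the even term `evenHom (anticommPoly d p a)`. -/
lemma qsGen_inr_mul_oddProd_mem (p : Fin r) (T : Finset (Fin r)) :
    qsGen m r d (.inr p) * oddProd m r d T ∈ oddSpan m r d (insert p T) := by
  induction T using Finset.induction_on_min generalizing p with
  | empty =>
    rw [qsGen_inr_mul_oddProd_of_lt (by simp)]
    exact oddProd_mem_oddSpan _
  | insert a T ha ih =>
    rw [oddProd, Finset.sortedProd_insert_of_lt ha, ← oddProd, ← mul_assoc]
    rcases lt_trichotomy p a with hpa | rfl | hap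
    · rw [mul_assoc, qsGen_inr_mul_oddProd_of_lt ha, qsGen_inr_mul_oddProd_of_lt]
      · exact oddProd_mem_oddSpan _
      · simpa using ⟨hpa, fun x hx => hpa.trans (ha x hx)⟩
    · rw [qsGen_inr_mul_self]
      exact oddSpan_mono (by grind) (evenHom_mul_mem_oddSpan _ (oddProd_mem_oddSpan T))
    · rw [eq_sub_of_add_eq (qsGen_inr_mul_add_swap (d := d) p a), sub_mul, mul_assoc]
      refine sub_mem (oddSpan_mono (by grind) (evenHom_mul_mem_oddSpan _ (oddProd_mem_oddSpan T)))
        ?_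
      rw [Finset.insert_comm]
      exact qsGen_inr_mul_mem_oddSpan_of_lt (by simpa using ⟨hap, ha⟩) (ih p)

lemma qsGen_mul_mem_oddSpan_univ (g : Fin m ⊕ Fin r) {u : QSAlgebra m r d}
    (hu : u ∈ oddSpan m r d Finset.univ) : qsGen m r d g * u ∈ oddSpan m r d Finset.univ := by
  cases g with
  | inl i => simpa [evenHom_X] using evenHom_mul_mem_oddSpan (X i) hu
  | inr p =>
    refine mul_mem_oddSpan (fun f U _ => ?_) hu
    rw [← mul_assoc, ← (evenHom_commute f _).eq, mul_assoc]
    exact oddSpan_mono (Finset.subset_univ _)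
      (evenHom_mul_mem_oddSpan f (qsGen_inr_mul_oddProd_mem p U))

lemma oddSpan_univ_eq_top : oddSpan m r d Finset.univ = ⊤ := by
  rw [eq_top_iff]
  rintro u -
  obtain ⟨z, rfl⟩ := RingQuot.mkAlgHom_surjective ℂ (QSRel m r d) u
  suffices ∀ v ∈ oddSpan m r d Finset.univ, RingQuot.mkAlgHom ℂ (QSRel m r d) z * v ∈
      oddSpan m r d Finset.univ by
    simpa using this 1 (by simpa [oddProd] using
      evenHom_mul_oddProd_mem_oddSpan (m := m) (d := d) 1 (Finset.empty_subset Finset.univ))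
  induction z using FreeAlgebra.induction with
  | grade0 c =>
    intro v hv
    rw [AlgHom.commutes, ← Algebra.smul_def]
    exact Submodule.smul_mem _ c hv
  | grade1 g => exact fun v hv => qsGen_mul_mem_oddSpan_univ g hv
  | mul a b ha hb => simpa [mul_assoc] using fun v hv => ha _ (hb v hv)
  | add a b ha hb => simpa [add_mul] using fun v hv => add_mem (ha v hv) (hb v hv)

lemma span_range_qsMonomial_eq_top :
    Submodule.span ℂ (Set.range (qsMonomial m r d)) = ⊤ := by
  refine eq_top_iff.2 (oddSpan_univ_eq_top.ge.trans (Submodule.span_le.2 ?_))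
  rintro _ ⟨f, U, -, rfl⟩
  induction f using MvPolynomial.induction_on' with
  | monomial k c =>
    have hc : monomial k c = c • monomial k 1 := by rw [smul_monomial, smul_eq_mul, mul_one]
    rw [hc, map_smul, smul_mul_assoc, ← Finsupp.equivFunOnFinite_symm_coe k, ← qsMonomial_eq]
    exact Submodule.smul_mem _ c (Submodule.subset_span ⟨_, rfl⟩)
  | add f g hf hg => simpa [add_mul] using add_mem hf hg

lemma anticommPoly_comm (hd : ∀ p q k l, d p q k l = d q p k l) (p q : Fin r) :
    anticommPoly d q p = anticommPoly d p q := by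
  simp [anticommPoly, hd q p]

variable (d) in
noncomputable def cliffordForm :
    QuadraticForm (MvPolynomial (Fin m) ℂ) (Fin r → MvPolynomial (Fin m) ℂ) :=
  LinearMap.BilinMap.toQuadraticMap <|
    Matrix.toLinearMap₂' (MvPolynomial (Fin m) ℂ) <|
      Matrix.of fun p q => (2⁻¹ : ℂ) • anticommPoly d p q

lemma polar_cliffordForm (hd : ∀ p q k l, d p q k l = d q p k l) (p q : Fin r) :
    QuadraticMap.polar (cliffordForm d) (Pi.basisFun _ _ p) (Pi.basisFun _ _ q) =
      anticommPoly d p q := by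
  simp [cliffordForm, LinearMap.BilinMap.polar_toQuadraticMap, Matrix.toLinearMap₂'_apply',
    anticommPoly_comm hd, ← add_smul]
  norm_num

open CliffordAlgebra in
noncomputable def toClifford (hd : ∀ p q k l, d p q k l = d q p k l) :
    QSAlgebra m r d →ₐ[ℂ] CliffordAlgebra (cliffordForm d) :=
  RingQuot.liftAlgHom ℂ ⟨FreeAlgebra.lift ℂ <|
    Sum.elim (fun i => algebraMap _ _ (X i : MvPolynomial (Fin m) ℂ))
      fun p => ι (cliffordForm d) (Pi.basisFun _ _ p), by
    rintro _ _ (⟨i, j⟩ | ⟨i, p⟩ | ⟨p, q⟩) <;>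
      simp only [map_add, map_mul, map_sum, map_smul, FreeAlgebra.lift_ι_apply, Sum.elim_inl,
        Sum.elim_inr]
    · rw [← map_mul, ← map_mul, mul_comm]
    · exact Algebra.commutes _ _
    · rw [ι_mul_ι_add_swap, polar_cliffordForm hd, anticommPoly, map_sum]
      simp [Algebra.smul_def, IsScalarTower.algebraMap_apply ℂ (MvPolynomial (Fin m) ℂ)]⟩

lemma toClifford_evenHom (hd : ∀ p q k l, d p q k l = d q p k l) (f : MvPolynomial (Fin m) ℂ) :
    toClifford hd (evenHom m r d f) = algebraMap _ _ f := by
  suffices (toClifford hd).comp (evenHom m r d) =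
      IsScalarTower.toAlgHom ℂ (MvPolynomial (Fin m) ℂ) (CliffordAlgebra (cliffordForm d)) from
    DFunLike.congr_fun this f
  exact MvPolynomial.algHom_ext fun i => by simp [evenHom_X, toClifford, qsGen]

lemma toClifford_oddProd (hd : ∀ p q k l, d p q k l = d q p k l) (U : Finset (Fin r)) :
    toClifford hd (oddProd m r d U) =
      U.sortedProd fun p => CliffordAlgebra.ι (cliffordForm d) (Pi.basisFun _ _ p) := by
  simp [oddProd, Finset.map_sortedProd, toClifford, qsGen]

theorem linearIndependent_qsMonomial (hd : ∀ p q k l, d p q k l = d q p k l) :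
    LinearIndependent ℂ (qsMonomial m r d) := by
  have hmonomial : LinearIndependent ℂ fun k : Fin m → ℕ =>
      (monomial (Finsupp.equivFunOnFinite.symm k) 1 : MvPolynomial (Fin m) ℂ) :=
    (basisMonomials (Fin m) ℂ).linearIndependent.comp _ Finsupp.equivFunOnFinite.symm.injective
  refine LinearIndependent.of_comp (toClifford hd).toLinearMap ?_
  convert linearIndependent_smul hmonomial
    (CliffordAlgebra.linearIndependent_sortedProd (cliffordForm d) (Pi.basisFun _ (Fin r)))
    with ⟨k, U⟩
  rw [Function.comp_apply, AlgHom.toLinearMap_apply, qsMonomial_eq, map_mul, toClifford_evenHom,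
    toClifford_oddProd, Algebra.smul_def]

end QSAlgebra

/-- PBW property for homogeneous quadratic superalgebras: the ordered monomials
form a `ℂ`-vector-space basis of the quotient algebra. -/
theorem qsAlgebra_pbw (m r : ℕ) (d : Fin r → Fin r → Fin m → Fin m → ℂ)
    (hd : ∀ p q k l, d p q k l = d q p k l) :
    LinearIndependent ℂ (qsMonomial m r d) ∧
      Submodule.span ℂ (Set.range (qsMonomial m r d)) = ⊤ :=
  ⟨QSAlgebra.linearIndependent_qsMonomial hd, QSAlgebra.span_range_qsMonomial_eq_top⟩
end

section
/- In the Clifford algebra Cl over ℂ of the quadratic form Q(u⊕v) = Σ_{i=1}^4 u_i v_i on ℂ⁴⊕ℂ⁴, with a_i = ι(e_i⊕0), a^i = ι(0⊕e_i), E^i_j := a^i a_j, S̄^i := (1/6) Σ_{k,l,m} ε^{iklm} a_k a_l a_m and S_j := (1/6) Σ_{k,l,m} ε_{jklm} a^k a^l a^m (ε the four-index Levi-Civita symbol), the following hold for all i,j,k ∈ {1,…,4}: E^i_j S̄^k − S̄^k E^i_j = δ^k_j S̄^i − δ^i_j S̄^k, and E^i_j S_k − S_k E^i_j = −δ^i_k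 S_j + δ^i_j S_k. -/
open scoped BigOperators

/-- The bilinear form `B((u,v),(u',v')) = Σᵢ uᵢ v'ᵢ` on `ℂ⁴ ⊕ ℂ⁴`. -/
noncomputable def fermB : (Fin 4 → ℂ) × (Fin 4 → ℂ) →ₗ[ℂ]
    (Fin 4 → ℂ) × (Fin 4 → ℂ) →ₗ[ℂ] ℂ :=
  LinearMap.mk₂ ℂ (fun w w' => ∑ i : Fin 4, w.1 i * w'.2 i)
    (by intro m₁ m₂ n; simp [add_mul, Finset.sum_add_distrib])
    (by intro t m n; simp [Finset.mul_sum, mul_assoc])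
    (by intro m n₁ n₂; simp [mul_add, Finset.sum_add_distrib])
    (by intro t m n; simp [Finset.mul_sum, mul_left_comm])

/-- The quadratic form `Q(u ⊕ v) = Σᵢ uᵢ vᵢ` on `ℂ⁴ ⊕ ℂ⁴`. -/
noncomputable def fermQ : QuadraticForm ℂ ((Fin 4 → ℂ) × (Fin 4 → ℂ)) :=
  LinearMap.BilinMap.toQuadraticMap fermB

/-- The Clifford algebra of `fermQ`. -/
noncomputable abbrev Cl := CliffordAlgebra fermQ

/-- The fermionic annihilation operators `a_i = ι(e_i ⊕ 0)`. -/
noncomputable def aLow (i : Fin 4) : Cl :=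
  CliffordAlgebra.ι fermQ (Pi.single i 1, 0)

/-- The fermionic creation operators `a^i = ι(0 ⊕ e_i)`. -/
noncomputable def aUp (i : Fin 4) : Cl :=
  CliffordAlgebra.ι fermQ (0, Pi.single i 1)

/-- The even generators `E^i_j = a^i a_j` of the fermionic oscillator realization. -/
noncomputable def fermE (i j : Fin 4) : Cl := aUp i * aLow j

/-- The four-index Levi-Civita symbol: `ε(i,j,k,l)` is the sign of the permutation
`(0,1,2,3) ↦ (i,j,k,l)` when the indices are pairwise distinct, and `0` otherwise. -/
noncomputable def lc (i j k l : Fin 4) : ℂ :=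
  ∑ σ : Equiv.Perm (Fin 4),
    if σ 0 = i ∧ σ 1 = j ∧ σ 2 = k ∧ σ 3 = l then ((Equiv.Perm.sign σ : ℤ) : ℂ) else 0

/-- The odd generators `S̄^i = (1/6) Σ ε^{iklm} a_k a_l a_m`. -/
noncomputable def fermSbar (i : Fin 4) : Cl :=
  (1 / 6 : ℂ) • ∑ k : Fin 4, ∑ l : Fin 4, ∑ m : Fin 4,
    lc i k l m • (aLow k * aLow l * aLow m)

/-- The odd generators `S_j = (1/6) Σ ε_{jklm} a^k a^l a^m`. -/
noncomputable def fermS (j : Fin 4) : Cl :=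
  (1 / 6 : ℂ) • ∑ k : Fin 4, ∑ l : Fin 4, ∑ m : Fin 4,
    lc j k l m • (aUp k * aUp l * aUp m)

/-!
For fixed `i, j`, `y ↦ E^i_j y - y E^i_j` is a derivation of `Cl` that acts on the generators by a
matrix unit: `[E^i_j, a_l] = -δ^i_l a_j` and `[E^i_j, a^l] = δ^l_j a^i`. If a derivation satisfies
`[e, x_l] = c δ^a_l x_b`, then by the Leibniz rule its value on `T^k = (1/6) ε^{klmn} x_l x_m x_n`
is `c/6` times the sum of the three contractions of `x_l x_m x_n` with `ε^{klmn}` in which `a`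
replaces, in turn, the index carried by `x_b`. The Schouten identity
`δ^p_k ε^{qlmn} + δ^p_l ε^{kqmn} + δ^p_m ε^{klqn} + δ^p_n ε^{klmq} = δ^p_q ε^{klmn}`,
which says that `ε` is a `gl(4)`-invariant density of weight one, turns this sum into
`c (δ^a_b T^k - δ^k_b T^a)`.
-/

open CliffordAlgebra

/-- An integer-valued copy of `lc`, so that identities between its values can be checked by
evaluation in the kernel. -/
def lcInt (i j k l : Fin 4) : ℤ :=
  ∑ σ : Equiv.Perm (Fin 4),
    if σ 0 = i ∧ σ 1 = j ∧ σ 2 = k ∧ σ 3 = l then (Equiv.Perm.sign σ : ℤ) else 0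

lemma lc_eq_lcInt (i j k l : Fin 4) : lc i j k l = lcInt i j k l := by
  simp only [lc, lcInt, Int.cast_sum, apply_ite (Int.cast : ℤ → ℂ), Int.cast_zero]

lemma lcInt_schouten : ∀ a b k l m n : Fin 4,
    (if k = a then lcInt b l m n else 0) + (if l = a then lcInt k b m n else 0) +
      (if m = a then lcInt k l b n else 0) + (if n = a then lcInt k l m b else 0) =
      if a = b then lcInt k l m n else 0 := by
  decide

lemma lc_schouten (a b k l m n : Fin 4) :
    (if k = a then lc b l m n else 0) + (if l = a then lc k b m n else 0) +
      (if m = a then lc k l b n else 0) + (if n = a then lc k l m b else 0) =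
      if a = b then lc k l m n else 0 := by
  simp only [lc_eq_lcInt]
  exact_mod_cast lcInt_schouten a b k l m n

lemma commutator_mul_mul {A : Type*} [Ring A] (e x y z : A) :
    e * (x * y * z) - x * y * z * e =
      (e * x - x * e) * y * z + x * (e * y - y * e) * z + x * y * (e * z - z * e) := by
  noncomm_ring

section LeviCivitaTriple

variable {A : Type*} [Ring A] [Algebra ℂ A]

noncomputable def leviCivitaTriple (x : Fin 4 → A) (k : Fin 4) : A :=
  (1 / 6 : ℂ) • ∑ l : Fin 4, ∑ m : Fin 4, ∑ n : Fin 4, lc k l m n • (x l * x m * x n)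

theorem commutator_leviCivitaTriple (x : Fin 4 → A) (e : A) (a b : Fin 4) (c : ℂ)
    (hx : ∀ l, e * x l - x l * e = if l = a then c • x b else 0) (k : Fin 4) :
    e * leviCivitaTriple x k - leviCivitaTriple x k * e =
      c • ((if a = b then leviCivitaTriple x k else 0) -
        if k = b then leviCivitaTriple x a else 0) := by
  have schouten : ∀ l m n,
      (if a = b then lc k l m n else 0) - (if k = b then lc a l m n else 0) =
        (if l = b then lc k a m n else 0) + (if m = b then lc k l a n else 0) +
          (if n = b then lc k l m a else 0) := by
    intro l m n
    have h := lc_schouten b a k l m n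
    simp only [@eq_comm _ b a] at h
    linear_combination -h
  calc e * leviCivitaTriple x k - leviCivitaTriple x k * e
      = (1 / 6 : ℂ) • ∑ l : Fin 4, ∑ m : Fin 4, ∑ n : Fin 4,
          lc k l m n • (e * (x l * x m * x n) - x l * x m * x n * e) := by
        simp only [leviCivitaTriple, mul_smul_comm, smul_mul_assoc, Finset.mul_sum,
          Finset.sum_mul, ← smul_sub, ← Finset.sum_sub_distrib]
    _ = c • (1 / 6 : ℂ) • ∑ l : Fin 4, ∑ m : Fin 4, ∑ n : Fin 4,
          ((if a = b then lc k l m n else 0) - (if k = b then lc a l m n else 0)) •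
            (x l * x m * x n) := by
        simp only [schouten, commutator_mul_mul, hx, one_div, ite_mul, smul_mul_assoc, zero_mul,
          mul_ite, mul_smul_comm, mul_zero, smul_add, smul_ite, smul_smul, smul_zero,
          Finset.sum_add_distrib, Finset.sum_ite_irrel, Finset.sum_const_zero,
          Finset.sum_ite_eq', Finset.mem_univ, if_true, Finset.smul_sum, add_smul, ite_smul,
          zero_smul]
        simp only [mul_assoc, mul_comm]
    _ = _ := by
        simp only [leviCivitaTriple, sub_smul, Finset.sum_sub_distrib, smul_sub, ite_smul,
          zero_smul]
        split_ifs <;> simp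

end LeviCivitaTriple

lemma fermSbar_eq_leviCivitaTriple : fermSbar = leviCivitaTriple aLow := rfl

lemma fermS_eq_leviCivitaTriple : fermS = leviCivitaTriple aUp := rfl

lemma polar_fermQ (w w' : (Fin 4 → ℂ) × (Fin 4 → ℂ)) :
    QuadraticMap.polar fermQ w w' = ∑ i, (w.1 i * w'.2 i + w'.1 i * w.2 i) := by
  rw [fermQ, LinearMap.BilinMap.polar_toQuadraticMap]
  exact Finset.sum_add_distrib.symm

lemma aLow_mul_aLow (p q : Fin 4) : aLow p * aLow q = -(aLow q * aLow p) := by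
  refine eq_neg_of_add_eq_zero_left ?_
  rw [aLow, aLow, ι_mul_ι_add_swap, polar_fermQ]
  simp

lemma aUp_mul_aUp (p q : Fin 4) : aUp p * aUp q = -(aUp q * aUp p) := by
  refine eq_neg_of_add_eq_zero_left ?_
  rw [aUp, aUp, ι_mul_ι_add_swap, polar_fermQ]
  simp

lemma aLow_mul_aUp (p q : Fin 4) :
    aLow p * aUp q = (if p = q then 1 else 0) - aUp q * aLow p := by
  rw [eq_sub_iff_add_eq, aLow, aUp, ι_mul_ι_add_swap, polar_fermQ]
  simp [Pi.single_apply, apply_ite (algebraMap ℂ Cl), eq_comm]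

lemma fermE_mul_aLow_sub (i j l : Fin 4) :
    fermE i j * aLow l - aLow l * fermE i j = if l = i then (-1 : ℂ) • aLow j else 0 := by
  rw [fermE, mul_assoc, aLow_mul_aLow j l, ← mul_assoc (aLow l), aLow_mul_aUp]
  obtain rfl | hli := eq_or_ne l i
  · simp only [if_true, sub_mul, one_mul, mul_neg, mul_assoc, neg_one_smul]
    abel
  · simp [hli, mul_assoc]

lemma fermE_mul_aUp_sub (i j l : Fin 4) :
    fermE i j * aUp l - aUp l * fermE i j = if l = j then (1 : ℂ) • aUp i else 0 := by
  rw [fermE, mul_assoc, aLow_mul_aUp, ← mul_assoc (aUp l), aUp_mul_aUp l i]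
  obtain rfl | hlj := eq_or_ne l j
  · simp only [if_true, mul_sub, mul_one, neg_mul, mul_assoc, one_smul]
    abel
  · simp [hlj, hlj.symm, mul_assoc]

/-- The odd generators of the fermionic oscillator realization transform as `gl(4)`
densities of weight `1`:
`[E^i_j, S̄^k] = δ^k_j S̄^i − δ^i_j S̄^k` and `[E^i_j, S_k] = −δ^i_k S_j + δ^i_j S_k`. -/
theorem fermE_fermS_commutation (i j k : Fin 4) :
    fermE i j * fermSbar k - fermSbar k * fermE i j =
      (if k = j then fermSbar i else 0) - (if i = j then fermSbar k else 0) ∧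
    fermE i j * fermS k - fermS k * fermE i j =
      -(if i = k then fermS j else 0) + (if i = j then fermS k else 0) := by
  constructor
  · rw [fermSbar_eq_leviCivitaTriple,
      commutator_leviCivitaTriple aLow (fermE i j) i j (-1) (fermE_mul_aLow_sub i j) k,
      neg_one_smul, neg_sub]
  · rw [fermS_eq_leviCivitaTriple,
      commutator_leviCivitaTriple aUp (fermE i j) j i 1 (fermE_mul_aUp_sub i j) k,
      one_smul, neg_add_eq_sub]
    simp only [@eq_comm _ k i, @eq_comm _ j i]
end

section
/- Let gl(4,ℂ) be the Lie algebra of 4×4 complex matrices with commutator bracket and matrix units E_{ab}. Let V be a Lie module over gl(4,ℂ) and v ∈ V with E_{ab} ⬝ v = 0 for all a > b, E_{aa} ⬝ v = μ_a • v for scalars μ_1,…,μ_4 ∈ ℂ, and additionally E_{12} ⬝ v = 0. Let W = ℂ⁴ with action X ⬝ w = −Xᵀ w and standard basis w_1,…,w_4. Then in the tensor product Lie module W ⊗ V, the vector Λ₃ := (μ_3 − μ_2) • (w_3 ⊗ v) + w_2 ⊗ (E_{23} ⬝ v) + w_1 ⊗ (E_{13} ⬝ v) is annihilated by E_{21}, E_{32},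 and E_{43}. -/
open scoped BigOperators TensorProduct

attribute [local instance 100] LieRing.ofAssociativeRing

/-- The matrix unit `E_{ab}` of `gl(4,ℂ)`. -/
noncomputable def glE (a b : Fin 4) : Matrix (Fin 4) (Fin 4) ℂ :=
  Matrix.single a b 1

/-- The contragredient fundamental module `W = ℂ⁴` of `gl(4,ℂ)`,
with action `X ⬝ w = −X.transpose w`. -/
noncomputable instance contragredientLieRingModule :
    LieRingModule (Matrix (Fin 4) (Fin 4) ℂ) (Fin 4 → ℂ) where
  bracket X w := -(X.transpose.mulVec w)
  add_lie X Y w := by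
    show -((X+Y).transpose.mulVec w) = -(X.transpose.mulVec w) + -(Y.transpose.mulVec w)
    rw [Matrix.transpose_add, Matrix.add_mulVec]; abel
  lie_add X w w' := by
    show -(X.transpose.mulVec (w + w')) = -(X.transpose.mulVec w) + -(X.transpose.mulVec w')
    rw [Matrix.mulVec_add]; abel
  leibniz_lie X Y w := by
    show -(X.transpose.mulVec (-(Y.transpose.mulVec w))) =
      -((⁅X, Y⁆).transpose.mulVec w) + -(Y.transpose.mulVec (-(X.transpose.mulVec w)))
    simp only [Ring.lie_def, Matrix.transpose_sub, Matrix.transpose_mul,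
      Matrix.sub_mulVec, Matrix.mulVec_neg, Matrix.mulVec_mulVec, neg_neg, neg_sub]
    abel

noncomputable instance contragredientLieModule :
    LieModule ℂ (Matrix (Fin 4) (Fin 4) ℂ) (Fin 4 → ℂ) where
  smul_lie t X w := by
    show -((t • X).transpose.mulVec w) = t • -(X.transpose.mulVec w)
    rw [Matrix.transpose_smul, Matrix.smul_mulVec, smul_neg]
  lie_smul t X w := by
    show -(X.transpose.mulVec (t • w)) = t • -(X.transpose.mulVec w)
    rw [Matrix.mulVec_smul, smul_neg]

/-- The standard basis vectors `w_c` of the contragredient module `W`. -/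
noncomputable def wvec (c : Fin 4) : Fin 4 → ℂ := Pi.single c 1

/-!
Each simple lowering operator `x = E_{k+1,k}` kills `v`, so on `E_{c3} ⬝ v` it acts through the
commutator `[x, E_{c3}]`, while on `W` it sends `w_{k+1}` to `-w_k` and kills the other `w_c`.
For `E_{21}`, the term `-w_1 ⊗ E_{23} ⬝ v` coming from `w_2` cancels
`w_1 ⊗ [E_{21}, E_{13}] ⬝ v = w_1 ⊗ E_{23} ⬝ v`. For `E_{32}`, `[E_{32}, E_{23}] = E_{33} - E_{22}`
produces `(μ_3 - μ_2) w_2 ⊗ v`, cancelling the image of the first summand, and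
`[E_{32}, E_{13}] = -E_{12}` kills the last summand because `E_{12} ⬝ v = 0`. `E_{43}` commutes
with `E_{23}` and `E_{13}` and kills `w_1, w_2, w_3`. In Lean the indices are `0`-based.
-/

theorem lie_lie_eq_of_lie_eq_zero {L M : Type*} [LieRing L] [AddCommGroup M] [LieRingModule L M]
    {x : L} {m : M} (hx : ⁅x, m⁆ = 0) (y : L) : ⁅x, ⁅y, m⁆⁆ = ⁅⁅x, y⁆, m⁆ := by
  rw [leibniz_lie, hx, lie_zero, add_zero]

theorem Matrix.lie_single_one_single_one {n R : Type*} [Fintype n] [DecidableEq n] [Ring R]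
    (i j k l : n) :
    ⁅(single i j 1 : Matrix n n R), (single k l 1 : Matrix n n R)⁆ =
      (if j = k then single i l 1 else 0) - (if l = i then single k j 1 else 0) := by
  rw [Ring.lie_def]
  congr 1 <;> split_ifs with h
  · rw [h, single_mul_single_same, mul_one]
  · exact single_mul_single_of_ne _ _ _ _ h _
  · rw [h, single_mul_single_same, mul_one]
  · exact single_mul_single_of_ne _ _ _ _ h _

theorem lie_glE_glE (a b c d : Fin 4) :
    ⁅glE a b, glE c d⁆ = (if b = c then glE a d else 0) - (if d = a then glE c b else 0) :=
  Matrix.lie_single_one_single_one a b c d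

theorem lie_glE_wvec (a b c : Fin 4) : ⁅glE a b, wvec c⁆ = if a = c then -wvec b else 0 := by
  show -((glE a b).transpose.mulVec (wvec c)) = _
  ext i
  simp [glE, wvec, Matrix.single]
  split_ifs <;> simp_all

theorem lie_glE_wvec_tmul {V : Type*} [AddCommGroup V] [Module ℂ V]
    [LieRingModule (Matrix (Fin 4) (Fin 4) ℂ) V] [LieModule ℂ (Matrix (Fin 4) (Fin 4) ℂ) V]
    (a b c : Fin 4) (u : V) :
    ⁅glE a b, wvec c ⊗ₜ[ℂ] u⁆ =
      (if a = c then -(wvec b ⊗ₜ[ℂ] u) else 0) + wvec c ⊗ₜ[ℂ] ⁅glE a b, u⁆ := by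
  rw [TensorProduct.LieModule.lie_tmul_right, lie_glE_wvec]
  split_ifs <;> simp [TensorProduct.neg_tmul]

/-- If `v` is a lowest-weight vector of `gl(4,ℂ)` with lowest weight `μ` which in
addition satisfies `E_{12} ⬝ v = 0` (the case `j₁ = 0`), then in `W ⊗ V` (`W` the
contragredient fundamental module) the candidate vector
`Λ₃ = (μ₃ − μ₂) • (w₃ ⊗ v) + w₂ ⊗ (E_{23} ⬝ v) + w₁ ⊗ (E_{13} ⬝ v)` is annihilated
by the simple lowering operators `E_{21}`, `E_{32}`, `E_{43}` (indices `0`-based). -/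
theorem lambda_three_lowest_weight (V : Type*) [AddCommGroup V] [Module ℂ V]
    [LieRingModule (Matrix (Fin 4) (Fin 4) ℂ) V]
    [LieModule ℂ (Matrix (Fin 4) (Fin 4) ℂ) V]
    (v : V) (μ : Fin 4 → ℂ)
    (hlow : ∀ a b : Fin 4, b < a → ⁅glE a b, v⁆ = 0)
    (hdiag : ∀ a : Fin 4, ⁅glE a a, v⁆ = μ a • v)
    (hE12 : ⁅glE 0 1, v⁆ = 0) :
    ⁅glE 1 0, (μ 2 - μ 1) • (wvec 2 ⊗ₜ[ℂ] v) + wvec 1 ⊗ₜ[ℂ] ⁅glE 1 2, v⁆ +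
        wvec 0 ⊗ₜ[ℂ] ⁅glE 0 2, v⁆⁆ = 0 ∧
    ⁅glE 2 1, (μ 2 - μ 1) • (wvec 2 ⊗ₜ[ℂ] v) + wvec 1 ⊗ₜ[ℂ] ⁅glE 1 2, v⁆ +
        wvec 0 ⊗ₜ[ℂ] ⁅glE 0 2, v⁆⁆ = 0 ∧
    ⁅glE 3 2, (μ 2 - μ 1) • (wvec 2 ⊗ₜ[ℂ] v) + wvec 1 ⊗ₜ[ℂ] ⁅glE 1 2, v⁆ +
        wvec 0 ⊗ₜ[ℂ] ⁅glE 0 2, v⁆⁆ = 0 := by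
  have h10 : ⁅glE 1 0, v⁆ = 0 := hlow 1 0 (by decide)
  have h21 : ⁅glE 2 1, v⁆ = 0 := hlow 2 1 (by decide)
  have h32 : ⁅glE 3 2, v⁆ = 0 := hlow 3 2 (by decide)
  -- `lie_smul` does not fire on `W ⊗ V` (the scalar actions come through different instance
  -- paths), so the scalar is first moved into `V`.
  refine ⟨?_, ?_, ?_⟩ <;>
    simp only [← TensorProduct.tmul_smul, lie_add, lie_smul, lie_glE_wvec_tmul, lie_glE_glE,
      lie_lie_eq_of_lie_eq_zero h10, lie_lie_eq_of_lie_eq_zero h21, lie_lie_eq_of_lie_eq_zero h32,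
      h10, h21, h32] <;>
    simp [hdiag, hE12, sub_smul]
end

section
/- Let gl(4,ℂ) be the Lie algebra of 4×4 complex matrices with commutator bracket and matrix units E_{ab}. Let V be a Lie module over gl(4,ℂ) and v ∈ V with E_{ab} ⬝ v = 0 for all a > b and E_{aa} ⬝ v = μ_a • v for scalars μ_1,…,μ_4 ∈ ℂ. Define d = ½(μ_1+μ_2−μ_3−μ_4), j_1 = ½(μ_2−μ_1), j_2 = ½(μ_4−μ_3). Then E_{42} ⬝ (E_{31} ⬝ (E_{13} ⬝ (E_{24} ⬝ v))) − E_{42} ⬝ (E_{31} ⬝ (E_{23} ⬝ (E_{14} ⬝ v))) − E_{41} ⬝ (E_{32} ⬝ (E_{13} ⬝ (E_{24} ⬝ v))) + E_{41} ⬝ (E_{32} ⬝ (E_{23} ⬝ (E_{14} ⬝ v))) = 2(d² − j_1² − j_2² − d − j_1 − j_2) • v; in particular, when j_1 j_2 = 0 this scalar equals 2(d − j_1 − j_2 − 1)(d + j_1 + j_2), which vanishes exactly under the massless conditions d = j_1 + j_2 + 1 or d = −j_1 − j_2. -/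
open scoped BigOperators

attribute [local instance 100] LieRing.ofAssociativeRing

/-!
Normal-order: each lowering unit `E_ab` (`a > b`) is commuted to the right with
`⁅x, ⁅y, w⁆⁆ = ⁅⁅x, y⁆, w⁆ + ⁅y, ⁅x, w⁆⁆` until it reaches `v` and kills it; the brackets
of matrix units produced on the way are again units, and the diagonal ones act on `v` by `μ`.
For indices `p < q < r < s` the four terms of `(W*)†W*` become `(μ_r - μ_p)(μ_s - μ_q)`,
`μ_q - μ_r` (twice) and `(μ_r - μ_q)(μ_s - μ_p)` times `v`; the rest is algebra in `d, j₁, j₂`.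
-/

section LieModule

variable {L M : Type*} [LieRing L] [AddCommGroup M] [LieRingModule L M]

theorem lie_lie_of_lie_eq_zero {x : L} {m : M} (hx : ⁅x, m⁆ = 0) (y : L) :
    ⁅x, ⁅y, m⁆⁆ = ⁅⁅x, y⁆, m⁆ := by
  rw [leibniz_lie, hx, lie_zero, add_zero]

theorem lie_lie_comm_of_lie_eq_zero {x y : L} (hxy : ⁅x, y⁆ = 0) (m : M) :
    ⁅x, ⁅y, m⁆⁆ = ⁅y, ⁅x, m⁆⁆ := by
  rw [leibniz_lie, hxy, zero_lie, zero_add]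

end LieModule

section MatrixUnits

open Matrix

variable {ι R M : Type*} [Fintype ι] [DecidableEq ι] [CommRing R]

local notation "E" a:max b:max => Matrix.single a b (1 : R)

theorem Matrix.single_one_lie_single_one (a b c d : ι) :
    ⁅E a b, E c d⁆ = (if b = c then E a d else 0) - (if d = a then E c b else 0) := by
  rw [Ring.lie_def]
  congr 1 <;> split_ifs with h <;> simp [h]

variable [AddCommGroup M] [Module R M] [LieRingModule (Matrix ι ι R) M]

theorem Matrix.single_lie_single_lie_of_lie_eq_zero {a b : ι} {w : M} {s t : R}
    (hw : ⁅E a b, w⁆ = 0) (ha : ⁅E a a, w⁆ = s • w) (hb : ⁅E b b, w⁆ = t • w) :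
    ⁅E a b, ⁅E b a, w⁆⁆ = (s - t) • w := by
  rw [lie_lie_of_lie_eq_zero hw, single_one_lie_single_one, if_pos rfl, if_pos rfl, sub_lie,
    ha, hb, sub_smul]

variable [LinearOrder ι]

structure IsLowestWeightVector (v : M) (μ : ι → R) : Prop where
  lie_single_of_lt : ∀ a b : ι, b < a → ⁅E a b, v⁆ = 0
  lie_single_self : ∀ a : ι, ⁅E a a, v⁆ = μ a • v

namespace IsLowestWeightVector

variable {v : M} {μ : ι → R} (hv : IsLowestWeightVector v μ)
include hv

theorem lie_single_lie_single {a b : ι} (hba : b < a) :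
    ⁅E a b, ⁅E b a, v⁆⁆ = (μ a - μ b) • v :=
  single_lie_single_lie_of_lie_eq_zero (hv.lie_single_of_lt a b hba) (hv.lie_single_self a)
    (hv.lie_single_self b)

/-- The last term is left alone: which of `E q p`, `E p q` kills `v` depends on the order of
`p` and `q`, and both orders occur in `(W*)†W*`. -/
theorem lie_single_lie_single_lie_single_lie_single {p q r s : ι} (hpq : p ≠ q)
    (hpr : p < r) (hqr : q < r) (hrs : r < s) :
    ⁅E s q, ⁅E r p, ⁅E q r, ⁅E p s, v⁆⁆⁆⁆ = (μ p - μ r) • v + ⁅E q p, ⁅E p q, v⁆⁆ := by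
  have hps : p ≠ s := (hpr.trans hrs).ne
  have hqs : q < s := hqr.trans hrs
  have hrps : ⁅E r p, ⁅E p s, v⁆⁆ = ⁅E r s, v⁆ := by
    rw [lie_lie_of_lie_eq_zero (hv.lie_single_of_lt r p hpr)]
    simp [single_one_lie_single_one, hrs.ne']
  have hsqps : ⁅E s q, ⁅E p s, v⁆⁆ = -⁅E p q, v⁆ := by
    rw [lie_lie_of_lie_eq_zero (hv.lie_single_of_lt s q hqs)]
    simp [single_one_lie_single_one, hpq.symm]
  have hsqrs : ⁅E s q, ⁅E r s, v⁆⁆ = 0 := by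
    rw [lie_lie_of_lie_eq_zero (hv.lie_single_of_lt s q hqs)]
    simp [single_one_lie_single_one, hqr.ne, hv.lie_single_of_lt r q hqr]
  calc _ = ⁅E s q, -⁅E q p, ⁅E p s, v⁆⁆ + ⁅E q r, ⁅E r s, v⁆⁆⁆ := by
        rw [leibniz_lie (E r p), hrps]
        simp [single_one_lie_single_one, hpq]
    _ = -(⁅E s p, ⁅E p s, v⁆⁆ - ⁅E q p, ⁅E p q, v⁆⁆) + ⁅E s r, ⁅E r s, v⁆⁆ := by
        rw [lie_add, lie_neg, leibniz_lie (E s q) (E q p), leibniz_lie (E s q) (E q r), hsqps,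
          hsqrs]
        simp [single_one_lie_single_one, hps, hrs.ne, sub_eq_add_neg]
    _ = (μ p - μ r) • v + ⁅E q p, ⁅E p q, v⁆⁆ := by
        rw [hv.lie_single_lie_single (hpr.trans hrs), hv.lie_single_lie_single hrs]
        module

variable [LieModule R (Matrix ι ι R) M]

theorem lie_single_self_lie_single {a c d : ι} (hac : a ≠ c) (had : a ≠ d) :
    ⁅E a a, ⁅E c d, v⁆⁆ = μ a • ⁅E c d, v⁆ := by
  rw [lie_lie_comm_of_lie_eq_zero (by simp [single_one_lie_single_one, hac, had.symm]),
    hv.lie_single_self, lie_smul]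

theorem lie_single_lie_single_lie_single {a b c d : ι} (hba : b < a) (hac : a ≠ c)
    (had : a ≠ d) (hbc : b ≠ c) (hbd : b ≠ d) :
    ⁅E a b, ⁅E b a, ⁅E c d, v⁆⁆⁆ = (μ a - μ b) • ⁅E c d, v⁆ := by
  refine single_lie_single_lie_of_lie_eq_zero ?_ (hv.lie_single_self_lie_single hac had)
    (hv.lie_single_self_lie_single hbc hbd)
  rw [lie_lie_comm_of_lie_eq_zero (by simp [single_one_lie_single_one, hbc, had.symm]),
    hv.lie_single_of_lt a b hba, lie_zero]

theorem adjoint_wStar_wStar_lie_eq_smul {p q r s : ι} (hpq : p < q) (hqr : q < r)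
    (hrs : r < s) :
    ⁅E s q, ⁅E r p, ⁅E p r, ⁅E q s, v⁆⁆⁆⁆ - ⁅E s q, ⁅E r p, ⁅E q r, ⁅E p s, v⁆⁆⁆⁆ -
        ⁅E s p, ⁅E r q, ⁅E p r, ⁅E q s, v⁆⁆⁆⁆ + ⁅E s p, ⁅E r q, ⁅E q r, ⁅E p s, v⁆⁆⁆⁆ =
      ((μ r - μ p) * (μ s - μ q) + 2 * (μ r - μ q) + (μ r - μ q) * (μ s - μ p)) • v := by
  have hpr := hpq.trans hqr
  have hqs := hqr.trans hrs
  have hps := hpr.trans hrs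
  rw [hv.lie_single_lie_single_lie_single hpr hqr.ne' hrs.ne hpq.ne hps.ne,
    hv.lie_single_lie_single_lie_single hqr hpr.ne' hrs.ne hpq.ne' hqs.ne,
    hv.lie_single_lie_single_lie_single_lie_single hpq.ne hpr hqr hrs,
    hv.lie_single_lie_single_lie_single_lie_single hpq.ne' hqr hpr hrs,
    hv.lie_single_lie_single hpq, hv.lie_single_of_lt q p hpq, lie_zero, lie_smul, lie_smul,
    hv.lie_single_lie_single hqs, hv.lie_single_lie_single hps, smul_smul, smul_smul]
  module

end IsLowestWeightVector

end MatrixUnits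

theorem two_mul_sub_sub_sub_one_mul_add_add_eq_zero_iff {K : Type*} [Field K] [NeZero (2 : K)]
    (d j1 j2 : K) :
    2 * (d - j1 - j2 - 1) * (d + j1 + j2) = 0 ↔ d = j1 + j2 + 1 ∨ d = -(j1 + j2) := by
  simp only [mul_eq_zero, two_ne_zero, false_or]
  exact or_congr ⟨fun h => by linear_combination h, fun h => by linear_combination h⟩
    ⟨fun h => by linear_combination h, fun h => by linear_combination h⟩

/-- On a lowest-weight vector `v` of a `gl(4,ℂ)`-module with lowest weight `μ`, the
operator `(W*)†W* = (E₄₂E₃₁ − E₄₁E₃₂)(E₁₃E₂₄ − E₂₃E₁₄)` acts by the scalar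
`2(d² − j₁² − j₂² − d − j₁ − j₂)`; moreover when `j₁j₂ = 0` this scalar equals
`2(d − j₁ − j₂ − 1)(d + j₁ + j₂)`, which vanishes exactly when `d = j₁ + j₂ + 1` or
`d = −j₁ − j₂` (matrix-unit indices here are `0`-based). -/
theorem Wstar_action_on_lowest_weight (V : Type*) [AddCommGroup V] [Module ℂ V]
    [LieRingModule (Matrix (Fin 4) (Fin 4) ℂ) V]
    [LieModule ℂ (Matrix (Fin 4) (Fin 4) ℂ) V]
    (v : V) (μ : Fin 4 → ℂ)
    (hlow : ∀ a b : Fin 4, b < a → ⁅glE a b, v⁆ = 0)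
    (hdiag : ∀ a : Fin 4, ⁅glE a a, v⁆ = μ a • v)
    (d j1 j2 : ℂ)
    (hd : d = (1 / 2 : ℂ) * (μ 0 + μ 1 - μ 2 - μ 3))
    (hj1 : j1 = (1 / 2 : ℂ) * (μ 1 - μ 0))
    (hj2 : j2 = (1 / 2 : ℂ) * (μ 3 - μ 2)) :
    (⁅glE 3 1, ⁅glE 2 0, ⁅glE 0 2, ⁅glE 1 3, v⁆⁆⁆⁆ -
        ⁅glE 3 1, ⁅glE 2 0, ⁅glE 1 2, ⁅glE 0 3, v⁆⁆⁆⁆ -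
        ⁅glE 3 0, ⁅glE 2 1, ⁅glE 0 2, ⁅glE 1 3, v⁆⁆⁆⁆ +
        ⁅glE 3 0, ⁅glE 2 1, ⁅glE 1 2, ⁅glE 0 3, v⁆⁆⁆⁆ =
      (2 * (d ^ 2 - j1 ^ 2 - j2 ^ 2 - d - j1 - j2)) • v) ∧
    (j1 * j2 = 0 →
      2 * (d ^ 2 - j1 ^ 2 - j2 ^ 2 - d - j1 - j2) =
          2 * (d - j1 - j2 - 1) * (d + j1 + j2) ∧
        (2 * (d - j1 - j2 - 1) * (d + j1 + j2) = 0 ↔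
          d = j1 + j2 + 1 ∨ d = -(j1 + j2))) := by
  have hv : IsLowestWeightVector v μ := ⟨hlow, hdiag⟩
  refine ⟨(hv.adjoint_wStar_wStar_lie_eq_smul (p := 0) (q := 1) (r := 2) (s := 3)
    (by decide) (by decide) (by decide)).trans ?_, fun hj => ⟨by linear_combination 4 * hj,
    two_mul_sub_sub_sub_one_mul_add_add_eq_zero_iff d j1 j2⟩⟩
  rw [hd, hj1, hj2]
  congr 1
  ring
end
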